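/- For f in the Schwartz class, the Zak transform satisfies the Poisson-type commutation relation Zf(x,ξ) = exp(2iπxξ)·Z𝓕f(ξ, -x) for all real x, ξ, where 𝓕f is the Fourier transform of f. -/

import Mathlib

/-!
Multiplying `f` by the character `t ↦ 𝐞 (-ξ t)` pulls the factor `exp (2πixξ)` out of `Zak f x ξ`
and leaves the periodization `∑ₖ g (x + k)` of the modulated Schwartz function `g`. Poisson
summation turns this into the Fourier series `∑ₙ 𝓕 g n e^{2πinx}`, and since modulation is
translation on the Fourier side, `𝓕 g n = 𝓕 f (n + ξ)`, which is the series defining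
`Zak (𝓕 f) ξ (-x)`.
-/

open Real

noncomputable def Zak (f : ℝ → ℂ) (x ξ : ℝ) : ℂ :=
  ∑' k : ℤ, f (x + (k : ℝ)) * Complex.exp (-2 * (π : ℂ) * Complex.I * (k : ℂ) * (ξ : ℂ))

open FourierTransform Complex

theorem iteratedDeriv_cexp_const_mul_ofReal (n : ℕ) (c : ℂ) :
    iteratedDeriv n (fun t : ℝ => cexp (c * t)) = fun t : ℝ => c ^ n * cexp (c * t) := by
  induction n with
  | zero => simp
  | succ n ih =>
    ext t
    have hexp : HasDerivAt (fun t : ℝ => cexp (c * t)) (cexp (c * t) * c) t := by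
      simpa using ((hasDerivAt_id (t : ℂ)).const_mul c).comp_ofReal.cexp
    rw [iteratedDeriv_succ, ih, (hexp.const_mul (c ^ n)).deriv]
    ring

theorem Real.hasTemperateGrowth_fourierChar_const_mul (ξ : ℝ) :
    (fun t : ℝ => (𝐞 (ξ * t) : ℂ)).HasTemperateGrowth := by
  set c : ℂ := 2 * π * ξ * I
  have hc : (fun t : ℝ => (𝐞 (ξ * t) : ℂ)) = fun t : ℝ => cexp (c * t) := by
    ext t
    rw [fourierChar_apply]
    congr 1
    push_cast
    ring
  rw [hc]
  refine ⟨?_, fun n => ⟨0, ‖c‖ ^ n, fun t => ?_⟩⟩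
  · exact ((Complex.contDiff_exp (𝕜 := ℂ)).restrict_scalars ℝ).comp
      ((contDiff_const (c := c)).mul ofRealCLM.contDiff)
  · rw [norm_iteratedFDeriv_eq_norm_iteratedDeriv, iteratedDeriv_cexp_const_mul_ofReal]
    simp [c, Complex.norm_exp]

theorem Real.fourier_fourierChar_smul {E : Type*} [NormedAddCommGroup E] [NormedSpace ℂ E]
    (f : ℝ → E) (ξ w : ℝ) :
    𝓕 (fun t => 𝐞 (ξ * t) • f t) w = 𝓕 f (w - ξ) := by
  simp only [fourier_real_eq, smul_smul, ← AddChar.map_add_eq_mul]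
  congr 1 with v
  ring_nf

theorem zak_eq_cexp_mul_tsum (f : ℝ → ℂ) (x ξ : ℝ) :
    Zak f x ξ = cexp (2 * π * I * x * ξ) * ∑' k : ℤ, 𝐞 (-ξ * (x + k)) • f (x + k) := by
  rw [Zak, ← tsum_mul_left]
  congr 1 with k
  rw [Circle.smul_def, fourierChar_apply, smul_eq_mul, mul_comm (f _), ← mul_assoc,
    ← Complex.exp_add]
  congr 2
  push_cast
  ring

theorem zak_neg_eq_tsum_fourier (F : ℝ → ℂ) (ξ x : ℝ) :
    Zak F ξ (-x) = ∑' n : ℤ, F (ξ + n) * fourier n (x : UnitAddCircle) := by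
  rw [Zak]
  congr 1 with n
  rw [fourier_coe_apply]
  congr 2
  push_cast
  ring

theorem zak_poisson (f : SchwartzMap ℝ ℂ) (x ξ : ℝ) :
    Zak (⇑f) x ξ
      = Complex.exp (2 * (π : ℂ) * Complex.I * (x : ℂ) * (ξ : ℂ))
          * Zak (FourierTransform.fourier (⇑f : ℝ → ℂ)) ξ (-x) := by
  set g := SchwartzMap.smulLeftCLM ℂ (fun t : ℝ => (𝐞 (-ξ * t) : ℂ)) f
  have hg : ∀ t, g t = 𝐞 (-ξ * t) • f t := fun t => by
    rw [SchwartzMap.smulLeftCLM_apply_apply (Real.hasTemperateGrowth_fourierChar_const_mul _),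
      Circle.smul_def]
  have hFg : ∀ w, 𝓕 g w = 𝓕 (⇑f) (w + ξ) := fun w => by
    rw [SchwartzMap.fourier_coe, funext hg, Real.fourier_fourierChar_smul, sub_neg_eq_add]
  rw [zak_eq_cexp_mul_tsum, zak_neg_eq_tsum_fourier]
  congr 1
  calc ∑' k : ℤ, 𝐞 (-ξ * (x + k)) • f (x + k)
      = ∑' k : ℤ, g (x + k) := by simp only [hg]
    _ = ∑' n : ℤ, 𝓕 g n * fourier n (x : UnitAddCircle) := g.tsum_eq_tsum_fourier x
    _ = _ := by simp only [hFg, add_comm]
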